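/- Let A¹ and A² be finite nonempty types. For each player i ∈ {1,2} let Q_1^i, Q_2^i : A¹ × A² → ℝ satisfy Q_1^i(a¹,a²) ≥ Q_2^i(a¹,a²) for all (a¹,a²). Let (σ¹,σ²) be a Nash equilibrium of the stage game (Q_1^1, Q_1^2) and let (τ¹,τ²) be a saddle point of the stage game (Q_2^1, Q_2^2). Then for each player i ∈ {1,2}: val(Q_1^i, σ¹, σ²) ≥ val(Q_2^i, τ¹, τ²). -/
import Mathlib


/-- A mixed strategy on a finite action set: nonnegative weights summing to one. -/
def IsMixed {A : Type*} [Fintype A] (σ : A → ℝ) : Prop :=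
  (∀ a, 0 ≤ σ a) ∧ ∑ a, σ a = 1

/-- The stage-game value `val(Q, σ, τ) = ∑_{a¹} ∑_{a²} σ(a¹)·τ(a²)·Q(a¹,a²)`. -/
noncomputable def stageVal {A B : Type*} [Fintype A] [Fintype B]
    (Q : A × B → ℝ) (σ : A → ℝ) (τ : B → ℝ) : ℝ :=
  ∑ a, ∑ b, σ a * τ b * Q (a, b)

/-- `(σ, τ)` is a Nash equilibrium of the stage game `(Q1, Q2)`. -/
def IsNashEq {A B : Type*} [Fintype A] [Fintype B]
    (Q1 Q2 : A × B → ℝ) (σ : A → ℝ) (τ : B → ℝ) : Prop :=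
  IsMixed σ ∧ IsMixed τ ∧
    (∀ σ', IsMixed σ' → stageVal Q1 σ' τ ≤ stageVal Q1 σ τ) ∧
    (∀ τ', IsMixed τ' → stageVal Q2 σ τ' ≤ stageVal Q2 σ τ)

/-- `(σ, τ)` is a global optimal point of the stage game `(Q1, Q2)`. -/
def IsGlobalOpt {A B : Type*} [Fintype A] [Fintype B]
    (Q1 Q2 : A × B → ℝ) (σ : A → ℝ) (τ : B → ℝ) : Prop :=
  IsMixed σ ∧ IsMixed τ ∧
    ∀ σ' τ', IsMixed σ' → IsMixed τ' →
      stageVal Q1 σ' τ' ≤ stageVal Q1 σ τ ∧ stageVal Q2 σ' τ' ≤ stageVal Q2 σ τ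

/-- `(σ, τ)` is a saddle point of the stage game `(Q1, Q2)`: a Nash equilibrium at
which each player's value would only increase if the opponent deviated. -/
def IsSaddlePt {A B : Type*} [Fintype A] [Fintype B]
    (Q1 Q2 : A × B → ℝ) (σ : A → ℝ) (τ : B → ℝ) : Prop :=
  IsNashEq Q1 Q2 σ τ ∧
    (∀ τ', IsMixed τ' → stageVal Q1 σ τ ≤ stageVal Q1 σ τ') ∧
    (∀ σ', IsMixed σ' → stageVal Q2 σ τ ≤ stageVal Q2 σ' τ)


lemma stageVal_mono {A B : Type*} [Fintype A] [Fintype B]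
    (Q Q' : A × B → ℝ) (h : ∀ a, Q' a ≤ Q a)
    (σ : A → ℝ) (τ : B → ℝ) (hσ : IsMixed σ) (hτ : IsMixed τ) :
    stageVal Q' σ τ ≤ stageVal Q σ τ := by
  refine Finset.sum_le_sum fun a _ => Finset.sum_le_sum fun b _ => ?_
  exact mul_le_mul_of_nonneg_left (h (a, b)) (mul_nonneg (hσ.1 a) (hτ.1 b))

/-- **Saddle-point case of the monotonicity step in Lemmas 6 and 7.**
If `Q1 i` dominates `Q2 i` entrywise, `(σ¹,σ²)` is a Nash equilibrium of the stage
game `(Q1 1, Q1 2)` and `(τ¹,τ²)` is a saddle point of the stage game `(Q2 1, Q2 2)`,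
then `val(Q1 i, σ¹, σ²) ≥ val(Q2 i, τ¹, τ²)` for each player `i`. -/
theorem stage_value_monotone_saddle
    {A₁ A₂ : Type*} [Fintype A₁] [Fintype A₂] [Nonempty A₁] [Nonempty A₂]
    (Q1 Q2 : Fin 2 → A₁ × A₂ → ℝ)
    (hdom : ∀ i a, Q1 i a ≥ Q2 i a)
    (σ1 : A₁ → ℝ) (σ2 : A₂ → ℝ) (τ1 : A₁ → ℝ) (τ2 : A₂ → ℝ)
    (hσ : IsNashEq (Q1 0) (Q1 1) σ1 σ2)
    (hτ : IsSaddlePt (Q2 0) (Q2 1) τ1 τ2) :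
    ∀ i : Fin 2, stageVal (Q1 i) σ1 σ2 ≥ stageVal (Q2 i) τ1 τ2 := by
  obtain ⟨hσ1, hσ2, hN1, hN2⟩ := hσ
  obtain ⟨⟨hτ1, hτ2, _, _⟩, hS1, hS2⟩ := hτ
  intro i
  fin_cases i
  · calc stageVal (Q2 0) τ1 τ2 ≤ stageVal (Q2 0) τ1 σ2 := hS1 σ2 hσ2
      _ ≤ stageVal (Q1 0) τ1 σ2 := stageVal_mono _ _ (hdom 0) _ _ hτ1 hσ2
      _ ≤ stageVal (Q1 0) σ1 σ2 := hN1 τ1 hτ1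
  · calc stageVal (Q2 1) τ1 τ2 ≤ stageVal (Q2 1) σ1 τ2 := hS2 σ1 hσ1
      _ ≤ stageVal (Q1 1) σ1 τ2 := stageVal_mono _ _ (hdom 1) _ _ hσ1 hτ2
      _ ≤ stageVal (Q1 1) σ1 σ2 := hN2 τ2 hτ2
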